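/- arXiv:2101.01823 — 7 statements merged into one kernel-verified Lean document; each statement's English description precedes it below -/
import Mathlib

section
/- Let K : ℝ → ℝ be continuous with K(t) ≤ 0 for all t, and let j : ℝ → ℝ be a Jacobi solution (j'' = -K·j) such that t ↦ |j(t)| is monotone on ℝ (either nonincreasing on all of ℝ or nondecreasing on all of ℝ). If j(t₀) = 0 for some t₀ ∈ ℝ, then j is identically zero. In other words, a stable or unstable Jacobi field can vanish only if it is identically zero. -/
/-!
If `|j|` is monotone and `j` vanishes at `t₀`, then `j` vanishes on a half-line ending at `t₀`,
so `j` and `j'` both vanish at an interior point of it. Since `K` is continuous, the first-order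
system for `(j, j')` is Lipschitz on every compact time interval, and uniqueness of solutions to
this linear ODE forces `j ≡ 0`.
-/

open Set Filter Topology NNReal

def jacobiVectorField (K : ℝ → ℝ) (t : ℝ) (p : ℝ × ℝ) : ℝ × ℝ := (p.2, -K t * p.1)

lemma lipschitzWith_jacobiVectorField {K : ℝ → ℝ} {C : ℝ≥0} {t : ℝ} (hC : |K t| ≤ C) :
    LipschitzWith (max 1 C) (jacobiVectorField K t) := by
  refine LipschitzWith.prod_snd.prodMk (LipschitzWith.of_dist_le_mul fun p q => ?_)
  calc dist (-K t * p.1) (-K t * q.1) = |K t| * dist p.1 q.1 := by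
        rw [Real.dist_eq, Real.dist_eq, ← abs_mul, ← abs_neg]; ring_nf
    _ ≤ C * dist p q :=
      mul_le_mul hC (by rw [Prod.dist_eq]; exact le_max_left _ _) dist_nonneg C.2

lemma hasDerivAt_jacobiVectorField {K j : ℝ → ℝ}
    (hj : Differentiable ℝ j) (hj' : Differentiable ℝ (deriv j))
    (hjacobi : ∀ t, deriv (deriv j) t = -K t * j t) (t : ℝ) :
    HasDerivAt (fun s => (j s, deriv j s)) (jacobiVectorField K t (j t, deriv j t)) t :=
  (hj t).hasDerivAt.prodMk (hjacobi t ▸ (hj' t).hasDerivAt)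

lemma jacobi_eq_zero_of_eq_zero_of_deriv_eq_zero {K j : ℝ → ℝ} {t₁ : ℝ}
    (hK : Continuous K) (hj : Differentiable ℝ j) (hj' : Differentiable ℝ (deriv j))
    (hjacobi : ∀ t, deriv (deriv j) t = -K t * j t)
    (h₁ : j t₁ = 0) (h₁' : deriv j t₁ = 0) (t : ℝ) : j t = 0 := by
  obtain ⟨a, b, ht, ht₁⟩ : ∃ a b, t ∈ Ioo a b ∧ t₁ ∈ Ioo a b :=
    ⟨min t t₁ - 1, max t t₁ + 1, by constructor <;> constructor <;> grind⟩
  obtain ⟨C, hC⟩ := isCompact_Icc.exists_bound_of_continuousOn (hK.continuousOn (s := Icc a b))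
  have hzero (s : ℝ) : HasDerivAt (fun _ => (0 : ℝ × ℝ)) (jacobiVectorField K s 0) s :=
    (hasDerivAt_const s _).congr_deriv (by simp [jacobiVectorField, Prod.zero_eq_mk])
  have := ODE_solution_unique_of_mem_Ioo (s := fun _ => univ)
    (fun s hs => (lipschitzWith_jacobiVectorField (C := C.toNNReal)
      ((hC s (Ioo_subset_Icc_self hs)).trans (Real.le_coe_toNNReal C))).lipschitzOnWith) ht₁
    (fun s _ => ⟨hasDerivAt_jacobiVectorField hj hj' hjacobi s, mem_univ _⟩)
    (fun s _ => ⟨hzero s, mem_univ _⟩) (Prod.ext h₁ h₁') ht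
  exact congrArg Prod.fst this

lemma jacobi_eq_zero_of_eqOn_zero {K j : ℝ → ℝ} {s : Set ℝ} (hK : Continuous K)
    (hj : Differentiable ℝ j) (hj' : Differentiable ℝ (deriv j))
    (hjacobi : ∀ t, deriv (deriv j) t = -K t * j t)
    (hs : (interior s).Nonempty) (hjs : EqOn j 0 s) (t : ℝ) : j t = 0 := by
  obtain ⟨t₁, ht₁⟩ := hs
  have hloc : j =ᶠ[𝓝 t₁] 0 := eventually_of_mem (mem_interior_iff_mem_nhds.mp ht₁) hjs
  exact jacobi_eq_zero_of_eq_zero_of_deriv_eq_zero hK hj hj' hjacobi hloc.eq_of_nhds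
    (hloc.deriv_eq.trans (deriv_const t₁ 0)) t

lemma eqOn_zero_Ici_of_antitone_abs {α : Type*} [Preorder α] {f : α → ℝ} {a : α}
    (hf : Antitone fun x => |f x|) (ha : f a = 0) : EqOn f 0 (Ici a) := fun _ hx =>
  abs_nonpos_iff.mp (by simpa [ha] using hf hx)

lemma eqOn_zero_Iic_of_monotone_abs {α : Type*} [Preorder α] {f : α → ℝ} {a : α}
    (hf : Monotone fun x => |f x|) (ha : f a = 0) : EqOn f 0 (Iic a) := fun _ hx =>
  abs_nonpos_iff.mp (by simpa [ha] using hf hx)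

theorem stable_or_unstable_jacobi_vanish_general (K j : ℝ → ℝ) (t₀ : ℝ)
    (hK : Continuous K)
    (hj : Differentiable ℝ j) (hj' : Differentiable ℝ (deriv j))
    (hjacobi : ∀ t, deriv (deriv j) t = -K t * j t)
    (hmono : Antitone (fun t => |j t|) ∨ Monotone (fun t => |j t|))
    (h0 : j t₀ = 0) :
    ∀ t, j t = 0 := by
  obtain ⟨s, hs, hjs⟩ : ∃ s : Set ℝ, (interior s).Nonempty ∧ EqOn j 0 s := by
    rcases hmono with hstable | hunstable
    · exact ⟨Ici t₀, by simp, eqOn_zero_Ici_of_antitone_abs hstable h0⟩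
    · exact ⟨Iic t₀, by simp, eqOn_zero_Iic_of_monotone_abs hunstable h0⟩
  exact jacobi_eq_zero_of_eqOn_zero hK hj hj' hjacobi hs hjs

/-- Let `K : ℝ → ℝ` be continuous and nonpositive and `j : ℝ → ℝ` a Jacobi solution
(`j'' = -K · j`) such that `t ↦ |j t|` is monotone on `ℝ` (nonincreasing or
nondecreasing, i.e. `j` is a stable or unstable Jacobi field). If `j` vanishes at
some point, then `j` is identically zero. -/
theorem stable_or_unstable_jacobi_vanish (K j : ℝ → ℝ) (t₀ : ℝ)
    (hK : Continuous K) (hKle : ∀ t, K t ≤ 0)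
    (hj : Differentiable ℝ j) (hj' : Differentiable ℝ (deriv j))
    (hjacobi : ∀ t, deriv (deriv j) t = -K t * j t)
    (hmono : Antitone (fun t => |j t|) ∨ Monotone (fun t => |j t|))
    (h0 : j t₀ = 0) :
    ∀ t, j t = 0 :=
  stable_or_unstable_jacobi_vanish_general K j t₀ hK hj hj' hjacobi hmono h0
end

section
/- Let K : ℝ → ℝ be continuous with K(t) ≤ 0 for all t, and let j : ℝ → ℝ be a Jacobi solution (j'' = -K·j) with j(t) > 0 for all t and j'(t) ≥ 0 for all t (a nonvanishing unstable solution). If K(t₀) < 0 for some t₀, then j'(t) > 0 for every t > t₀. That is, a nonzero unstable Jacobi field has strictly increasing norm after any time at which the curvature is negative. -/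
/-- Let `K : ℝ → ℝ` be continuous and nonpositive and `j : ℝ → ℝ` a Jacobi solution
(`j'' = -K · j`) with `j > 0` everywhere and `j' ≥ 0` everywhere (a nonvanishing
unstable solution). If `K t₀ < 0` for some `t₀`, then `j' t > 0` for every `t > t₀`. -/
theorem unstable_jacobi_strictly_increasing_after_negative_curvature
    (K j : ℝ → ℝ) (t₀ : ℝ)
    (hK : Continuous K) (hKle : ∀ t, K t ≤ 0)
    (hj : Differentiable ℝ j) (hj' : Differentiable ℝ (deriv j))
    (hjacobi : ∀ t, deriv (deriv j) t = -K t * j t)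
    (hpos : ∀ t, 0 < j t) (hd : ∀ t, 0 ≤ deriv j t)
    (hK0 : K t₀ < 0) :
    ∀ t, t₀ < t → 0 < deriv j t := by
  intro t ht
  -- deriv j is monotone
  have hmono : Monotone (deriv j) := by
    apply monotone_of_deriv_nonneg hj'
    intro u
    rw [hjacobi u]
    have := hKle u
    nlinarith [hpos u]
  -- find δ with K < 0 near t₀
  obtain ⟨δ, hδ, hball⟩ : ∃ δ > 0, ∀ u, |u - t₀| < δ → K u < 0 := by
    have : ∀ᶠ u in nhds t₀, K u < 0 :=
      (hK.continuousAt).eventually_lt continuous_const.continuousAt hK0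
    rcases Metric.eventually_nhds_iff.mp this with ⟨δ, hδ, h⟩
    exact ⟨δ, hδ, fun u hu => h (by simpa [Real.dist_eq] using hu)⟩
  set s := min t (t₀ + δ / 2) with hs
  have hst₀ : t₀ < s := lt_min ht (by linarith)
  have hKneg : ∀ u ∈ Set.Icc t₀ s, K u < 0 := by
    intro u hu
    apply hball
    have h1 : u ≤ t₀ + δ / 2 := le_trans hu.2 (min_le_right _ _)
    rw [abs_lt]
    constructor <;> [linarith [hu.1]; linarith]
  have hstrict : StrictMonoOn (deriv j) (Set.Icc t₀ s) := by
    apply strictMonoOn_of_deriv_pos (convex_Icc t₀ s) (hj'.continuous.continuousOn)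
    intro u hu
    rw [interior_Icc] at hu
    rw [hjacobi u]
    have := hKneg u ⟨le_of_lt hu.1, le_of_lt hu.2⟩
    nlinarith [hpos u]
  have h1 : deriv j t₀ < deriv j s :=
    hstrict ⟨le_refl _, le_of_lt hst₀⟩ ⟨le_of_lt hst₀, le_refl _⟩ hst₀
  have h2 : deriv j s ≤ deriv j t := hmono (min_le_left _ _)
  have := hd t₀
  linarith
end

section
/- Let K : ℝ → ℝ be continuous with K(t) ≤ 0 for all t, and let j : ℝ → ℝ be a Jacobi solution (j'' = -K·j) with j(t) > 0 for all t and j'(t) ≤ 0 for all t (a nonvanishing stable solution). If K(t₀) < 0 for some t₀, then j'(t) < 0 for every t < t₀. That is, a nonzero stable Jacobi field has strictly decreasing norm before any time at which the curvature is negative. -/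
/-- Let `K : ℝ → ℝ` be continuous and nonpositive and `j : ℝ → ℝ` a Jacobi solution
(`j'' = -K · j`) with `j > 0` everywhere and `j' ≤ 0` everywhere (a nonvanishing
stable solution). If `K t₀ < 0` for some `t₀`, then `j' t < 0` for every `t < t₀`. -/
theorem stable_jacobi_strictly_decreasing_before_negative_curvature
    (K j : ℝ → ℝ) (t₀ : ℝ)
    (hK : Continuous K) (hKle : ∀ t, K t ≤ 0)
    (hj : Differentiable ℝ j) (hj' : Differentiable ℝ (deriv j))
    (hjacobi : ∀ t, deriv (deriv j) t = -K t * j t)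
    (hpos : ∀ t, 0 < j t) (hd : ∀ t, deriv j t ≤ 0)
    (hK0 : K t₀ < 0) :
    ∀ t, t < t₀ → deriv j t < 0 := by
  intro t ht
  by_contra h
  push_neg at h
  have ht0 : deriv j t = 0 := le_antisymm (hd t) h
  -- deriv j is monotone since its derivative is nonneg
  have hmono : Monotone (deriv j) := by
    apply monotone_of_deriv_nonneg hj'
    intro s
    rw [hjacobi s]
    have := hKle s
    have := (hpos s).le
    nlinarith
  -- deriv j = 0 on (t, ∞)
  have hzero : ∀ s, t < s → deriv j s = 0 := fun s hs =>
    le_antisymm (hd s) (ht0 ▸ hmono hs.le)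
  -- hence deriv (deriv j) t₀ = 0
  have hev : deriv j =ᶠ[nhds t₀] fun _ => (0 : ℝ) := by
    filter_upwards [Ioi_mem_nhds ht] with s hs
    exact hzero s hs
  have h1 : deriv (deriv j) t₀ = 0 := by
    rw [hev.deriv_eq, deriv_const]
  have h2 := hjacobi t₀
  have := hpos t₀
  nlinarith [h1, h2]
end

section
/- Let K : ℝ → ℝ be continuous with K(t) ≤ 0 for all t, and suppose K(t₁) < 0 for some t₁. If j : ℝ → ℝ is a Jacobi solution (j'' = -K·j) such that t ↦ |j(t)| is constant on ℝ, then j is identically zero. In particular, along a geodesic that meets a region of negative curvature, no nonzero Jacobi field is simultaneously stable and unstable (the geodesic is regular). -/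
/-- Let `K : ℝ → ℝ` be continuous and nonpositive with `K t₁ < 0` for some `t₁`.
If `j : ℝ → ℝ` is a Jacobi solution (`j'' = -K · j`) such that `t ↦ |j t|` is
constant on `ℝ`, then `j` is identically zero. -/
theorem jacobi_constant_norm_zero_of_negative_curvature_somewhere
    (K j : ℝ → ℝ) (t₁ : ℝ)
    (hK : Continuous K) (hKle : ∀ t, K t ≤ 0) (hKneg : K t₁ < 0)
    (hj : Differentiable ℝ j) (hj' : Differentiable ℝ (deriv j))
    (hjacobi : ∀ t, deriv (deriv j) t = -K t * j t)
    (hconst : ∀ s t : ℝ, |j s| = |j t|) :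
    ∀ t, j t = 0 := by
  intro t
  by_contra ht
  have hnz : ∀ s, j s ≠ 0 := by
    intro s hs
    apply ht
    have := hconst t s
    rw [hs, abs_zero] at this
    exact abs_eq_zero.mp this
  have hcst : ∀ s, j s = j t := by
    intro s
    rcases abs_eq_abs.mp (hconst s t) with h | h
    · exact h
    · exfalso
      have hprod : j s * j t < 0 := by
        rw [h, neg_mul]
        exact neg_lt_zero.mpr (mul_self_pos.mpr (hnz t))
      have h0 : (0 : ℝ) ∈ Set.uIcc (j s) (j t) := by
        rw [Set.mem_uIcc]
        rcases mul_neg_iff.mp hprod with ⟨h1, h2⟩ | ⟨h1, h2⟩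
        · exact Or.inr ⟨h2.le, h1.le⟩
        · exact Or.inl ⟨h1.le, h2.le⟩
      obtain ⟨u, -, hu⟩ := intermediate_value_uIcc (hj.continuous.continuousOn) h0
      exact hnz u hu
  have hjc : j = fun _ => j t := funext hcst
  have h0 : deriv (deriv j) t₁ = 0 := by rw [hjc]; simp
  have h1 := hjacobi t₁
  rw [h0] at h1
  exact mul_ne_zero (neg_ne_zero.mpr hKneg.ne) (hnz t₁) h1.symm
end

section
/- Let K : ℝ → ℝ be continuous with -c² ≤ K(t) ≤ 0 for all t, for some constant c > 0. Then for every w ∈ ℝ there exists a unique Jacobi solution j : ℝ → ℝ (j'' = -K·j) with j(0) = w such that t ↦ |j(t)| is nonincreasing on ℝ. That is, there is a unique stable Jacobi field with any prescribed initial value. -/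
/-!
For `K ≤ 0` the square of a Jacobi solution is convex, since `(j²)'' = 2 j'² - 2 K j² ≥ 0`.
Consequently a solution with two zeros vanishes between them, hence everywhere by uniqueness for
the ODE; and a solution that is bounded on `[0, ∞)` has `|j|` nonincreasing, because a convex
function bounded above on a ray `[a, ∞)` is antitone.

Uniqueness: the difference of two stable solutions with the same value at `0` is bounded on
`[0, ∞)`, so its absolute value is nonincreasing from `0`, and it vanishes at `0` and at `1`.

Existence: let `A`, `B` be the solutions with `(j, j')(0) = (1, 0)` and `(0, 1)`. As `B` has no
zero on `(0, ∞)`, the solution `A - (A s / B s) B` vanishes at `s`, so it is bounded by `1` on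
`[0, s]`. The coefficients `u` with `|A + u B| ≤ 1` on `[0, s]` form nested nonempty compact sets;
any `u` in their intersection gives a solution bounded by `1` on `[0, ∞)`.

Solutions exist on all of `ℝ` since `(j, j')` solves a linear system with bounded coefficients:
Picard–Lindelöf then gives local solutions on intervals of one fixed length about every point,
and these glue.
-/

open Set Filter Topology
open scoped NNReal

section LinearODE

variable {E : Type*} [NormedAddCommGroup E] [NormedSpace ℝ E] {v : ℝ → E → E}
  {A : ℝ → E →L[ℝ] E} {L : ℝ≥0}

theorem IsIntegralCurveOn.exists_glue_Icc {γ₁ γ₂ : ℝ → E} {a b c : ℝ} (hab : a ≤ b)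
    (hbc : b ≤ c) (h₁ : IsIntegralCurveOn γ₁ v (Icc a b)) (h₂ : IsIntegralCurveOn γ₂ v (Icc b c))
    (hb : γ₁ b = γ₂ b) :
    ∃ γ : ℝ → E, EqOn γ γ₁ (Iic b) ∧ EqOn γ γ₂ (Ici b) ∧ IsIntegralCurveOn γ v (Icc a c) := by
  set γ := (Iic b).piecewise γ₁ γ₂
  have e₁ : EqOn γ γ₁ (Iic b) := piecewise_eqOn _ _ _
  have e₂ : EqOn γ γ₂ (Ici b) := fun t (ht : b ≤ t) ↦ by
    rcases ht.eq_or_lt with rfl | ht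
    · exact (e₁ (mem_Iic.2 le_rfl)).trans hb
    · exact piecewise_eq_of_notMem _ _ _ (not_le.2 ht)
  refine ⟨γ, e₁, e₂, fun t ht ↦ ?_⟩
  rw [← Icc_union_Icc_eq_Icc hab hbc]
  have hcl (s : Set ℝ) (hs : IsClosed s) (hts : t ∉ s) {γ' : E} : HasDerivWithinAt γ γ' s t :=
    hasDerivWithinAt_iff_hasFDerivWithinAt.2 (.of_notMem_closure (by rwa [hs.closure_eq]))
  refine HasDerivWithinAt.union ?_ ?_
  · by_cases htb : t ≤ b
    · rw [e₁ htb]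
      exact (h₁ t ⟨ht.1, htb⟩).congr (fun s hs ↦ e₁ hs.2) (e₁ htb)
    · exact hcl _ isClosed_Icc fun h ↦ htb h.2
  · by_cases htb : b ≤ t
    · rw [e₂ htb]
      exact (h₂ t ⟨htb, ht.2⟩).congr (fun s hs ↦ e₂ hs.1) (e₂ htb)
    · exact hcl _ isClosed_Icc fun h ↦ htb h.1

variable [CompleteSpace E]

theorem exists_isIntegralCurveOn_Icc_of_nnnorm_le (hA : ∀ x, Continuous fun t ↦ A t x)
    (hL : ∀ t, ‖A t‖₊ ≤ L) {h : ℝ} (h₀ : 0 ≤ h) (hLh : 2 * L * h ≤ 1) (t₁ : ℝ) (x₁ : E) :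
    ∃ γ : ℝ → E, γ t₁ = x₁ ∧ IsIntegralCurveOn γ (fun t ↦ A t) (Icc (t₁ - h) (t₁ + h)) := by
  have ht₁ : t₁ ∈ Icc (t₁ - h) (t₁ + h) := ⟨by linarith, by linarith⟩
  -- On the ball of radius `‖x₁‖ + 1` about `x₁` the field is bounded by `L (2 ‖x₁‖ + 1)`,
  -- which keeps solutions inside the ball for a time `h ≤ 1 / (2 L)`.
  have hPL : IsPicardLindelof (fun t ↦ A t) (⟨t₁, ht₁⟩ : Icc (t₁ - h) (t₁ + h)) x₁
      (‖x₁‖₊ + 1) 0 (L * (2 * ‖x₁‖₊ + 1)) L := by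
    refine ⟨fun t _ ↦ ((A t).lipschitz.weaken (hL t)).lipschitzOnWith,
      fun x _ ↦ (hA x).continuousOn, fun t _ x hx ↦ ?_, ?_⟩
    · have hx : ‖x‖ ≤ 2 * ‖x₁‖ + 1 := by
        have := norm_le_norm_add_norm_sub' x x₁
        rw [Metric.mem_closedBall, dist_eq_norm] at hx
        push_cast at hx
        linarith
      calc ‖A t x‖ ≤ ‖A t‖ * ‖x‖ := (A t).le_opNorm x
        _ ≤ L * (2 * ‖x₁‖ + 1) := by
          gcongr
          exact hL t
        _ = _ := by push_cast; rfl
    · simp only [add_sub_cancel_left, sub_sub_cancel, max_self, NNReal.coe_mul, NNReal.coe_add,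
        NNReal.coe_ofNat, NNReal.coe_one, coe_nnnorm, NNReal.coe_zero, sub_zero]
      nlinarith [norm_nonneg x₁]
  exact hPL.exists_eq_forall_mem_Icc_hasDerivWithinAt₀

theorem exists_isIntegralCurveOn_Icc_nat_mul_of_nnnorm_le (hA : ∀ x, Continuous fun t ↦ A t x)
    (hL : ∀ t, ‖A t‖₊ ≤ L) {h : ℝ} (h₀ : 0 ≤ h) (hLh : 2 * L * h ≤ 1) (t₀ : ℝ) (x₀ : E)
    (n : ℕ) : ∃ γ : ℝ → E, γ t₀ = x₀ ∧
      IsIntegralCurveOn γ (fun t ↦ A t) (Icc (t₀ - n * h) (t₀ + n * h)) := by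
  induction n with
  | zero => simpa using exists_isIntegralCurveOn_Icc_of_nnnorm_le hA hL le_rfl (by simp) t₀ x₀
  | succ n ih =>
    obtain ⟨γ, hγ₀, hγ⟩ := ih
    set a := t₀ - n * h
    set b := t₀ + n * h
    have hab : a ≤ b := by have := mul_nonneg n.cast_nonneg h₀; linarith
    obtain ⟨γa, hγa, hγa'⟩ := exists_isIntegralCurveOn_Icc_of_nnnorm_le hA hL h₀ hLh a (γ a)
    obtain ⟨γb, hγb, hγb'⟩ := exists_isIntegralCurveOn_Icc_of_nnnorm_le hA hL h₀ hLh b (γ b)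
    obtain ⟨γ₁, -, hγ₁, hγ₁'⟩ :=
      (hγa'.mono (Icc_subset_Icc_right (by linarith))).exists_glue_Icc (by linarith) hab hγ hγa
    obtain ⟨γ₂, hγ₂, -, hγ₂'⟩ := hγ₁'.exists_glue_Icc (by linarith) (by linarith : b ≤ b + h)
      (hγb'.mono (Icc_subset_Icc_left (by linarith))) ((hγ₁ hab).trans hγb.symm)
    refine ⟨γ₂, ?_, ?_⟩
    · rw [hγ₂ (show t₀ ≤ b by simp [b]; positivity), hγ₁ (show a ≤ t₀ by simp [a]; positivity), hγ₀]
    · convert hγ₂' using 2 <;> push_cast <;> ring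

theorem exists_isIntegralCurve_of_nnnorm_le (hA : ∀ x, Continuous fun t ↦ A t x)
    (hL : ∀ t, ‖A t‖₊ ≤ L) (t₀ : ℝ) (x₀ : E) :
    ∃ γ : ℝ → E, γ t₀ = x₀ ∧ IsIntegralCurve γ (fun t ↦ A t) := by
  set h : ℝ := 1 / (2 * L + 1)
  have h₀ : 0 < h := by positivity
  have hLh : 2 * L * h ≤ 1 := by
    rw [mul_one_div, div_le_one (by positivity)]
    linarith
  choose γ hγ₀ hγ using exists_isIntegralCurveOn_Icc_nat_mul_of_nnnorm_le hA hL h₀.le hLh t₀ x₀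
  set I : ℕ → Set ℝ := fun n ↦ Ioo (t₀ - n * h) (t₀ + n * h)
  have hγI (n : ℕ) (t : ℝ) (ht : t ∈ I n) : HasDerivAt (γ n) (A t (γ n t)) t :=
    (hγ n t (Ioo_subset_Icc_self ht)).hasDerivAt (Icc_mem_nhds ht.1 ht.2)
  have hagree (m n : ℕ) (hmn : m ≤ n) : EqOn (γ m) (γ n) (I m) := by
    intro s hs
    have ht₀ : t₀ ∈ I m := by
      have := hs.1.trans hs.2
      constructor <;> linarith
    have hmn' : I m ⊆ I n := by
      have : (m : ℝ) * h ≤ n * h := by gcongr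
      exact Ioo_subset_Ioo (by linarith) (by linarith)
    exact ODE_solution_unique_of_mem_Ioo (s := fun _ ↦ univ)
      (fun t _ ↦ ((A t).lipschitz.weaken (hL t)).lipschitzOnWith) ht₀
      (fun t ht ↦ ⟨hγI m t ht, trivial⟩) (fun t ht ↦ ⟨hγI n t (hmn' ht), trivial⟩)
      (by rw [hγ₀, hγ₀]) hs
  choose N hN using fun t : ℝ ↦ exists_nat_gt (|t - t₀| / h)
  have hmem (t : ℝ) : t ∈ I (N t) := by
    have := abs_lt.1 ((div_lt_iff₀ h₀).1 (hN t))
    constructor <;> linarith [this.1, this.2]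
  refine ⟨fun t ↦ γ (N t) t, hγ₀ _, fun t ↦ (hγI _ t (hmem t)).congr_of_eventuallyEq ?_⟩
  filter_upwards [isOpen_Ioo.mem_nhds (hmem t)] with s hs
  rcases le_total (N s) (N t) with hst | hts
  · exact hagree _ _ hst (hmem s)
  · exact (hagree _ _ hts hs).symm

end LinearODE

theorem ConvexOn.antitone_of_forall_Ici_le {f : ℝ → ℝ} (hf : ConvexOn ℝ univ f) {a M : ℝ}
    (hM : ∀ t ∈ Ici a, f t ≤ M) : Antitone f := by
  intro x y hxy
  by_contra! hlt
  have hxy : x < y := hxy.lt_of_ne (by rintro rfl; exact lt_irrefl _ hlt)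
  set s := (f y - f x) / (y - x)
  have hs : 0 < s := div_pos (by linarith) (by linarith)
  obtain ⟨z, hz⟩ := exists_gt (max (max a y) (y + (M - f y) / s))
  simp only [max_lt_iff] at hz
  have hslope := hf.slope_mono_adjacent (mem_univ x) (mem_univ z) hxy hz.1.2
  rw [le_div_iff₀ (by linarith)] at hslope
  have hgrow : M - f y < s * (z - y) := by
    rw [← div_lt_iff₀' hs]
    linarith
  linarith [hM z (mem_Ici.2 hz.1.1.le)]

def jacobiOperator (K : ℝ → ℝ) (t : ℝ) : ℝ × ℝ →L[ℝ] ℝ × ℝ :=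
  (ContinuousLinearMap.snd ℝ ℝ ℝ).prod (-K t • ContinuousLinearMap.fst ℝ ℝ ℝ)

@[simp]
theorem jacobiOperator_apply (K : ℝ → ℝ) (t : ℝ) (p : ℝ × ℝ) :
    jacobiOperator K t p = (p.2, -K t * p.1) :=
  rfl

theorem norm_jacobiOperator_le (K : ℝ → ℝ) (t : ℝ) : ‖jacobiOperator K t‖ ≤ max 1 |K t| := by
  refine ContinuousLinearMap.opNorm_le_bound _ (by positivity) fun p ↦ ?_
  simp only [jacobiOperator_apply, Prod.norm_def, Real.norm_eq_abs, abs_mul, abs_neg]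
  refine max_le ?_ ?_
  · exact (le_max_right _ _).trans (le_mul_of_one_le_left (by positivity) (le_max_left _ _))
  · gcongr
    · exact le_max_right _ _
    · exact le_max_left _ _

theorem nnnorm_jacobiOperator_le {K : ℝ → ℝ} {C : ℝ} (hKb : ∀ t, |K t| ≤ C) (t : ℝ) :
    ‖jacobiOperator K t‖₊ ≤ (max 1 C).toNNReal := by
  rw [Real.le_toNNReal_iff_coe_le (by positivity), coe_nnnorm]
  exact (norm_jacobiOperator_le K t).trans (max_le_max le_rfl (hKb t))

def jacobiSolutions (K : ℝ → ℝ) : Submodule ℝ (ℝ → ℝ) where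
  carrier := {j | Differentiable ℝ j ∧ Differentiable ℝ (deriv j) ∧
    ∀ t, deriv (deriv j) t = -K t * j t}
  zero_mem' := ⟨differentiable_const 0, by simp, by simp⟩
  add_mem' := by
    rintro j g ⟨hj, hj', hj''⟩ ⟨hg, hg', hg''⟩
    have e : deriv (j + g) = deriv j + deriv g := funext fun t ↦ deriv_add (hj t) (hg t)
    refine ⟨hj.add hg, e ▸ hj'.add hg', fun t ↦ ?_⟩
    rw [e, deriv_add (hj' t) (hg' t), hj'', hg'', Pi.add_apply]
    ring
  smul_mem' := by
    rintro a j ⟨hj, hj', hj''⟩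
    have e : deriv (a • j) = a • deriv j := funext fun t ↦ deriv_const_smul a (hj t)
    refine ⟨hj.const_smul a, e ▸ hj'.const_smul a, fun t ↦ ?_⟩
    rw [e, deriv_const_smul a (hj' t)]
    simp only [Pi.smul_apply, hj'', smul_eq_mul]
    ring

namespace jacobiSolutions

variable {K j : ℝ → ℝ}

theorem hasDerivAt (hj : j ∈ jacobiSolutions K) (t : ℝ) : HasDerivAt j (deriv j t) t :=
  (hj.1 t).hasDerivAt

theorem hasDerivAt_deriv (hj : j ∈ jacobiSolutions K) (t : ℝ) :
    HasDerivAt (deriv j) (-K t * j t) t :=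
  hj.2.2 t ▸ (hj.2.1 t).hasDerivAt

theorem isIntegralCurve (hj : j ∈ jacobiSolutions K) :
    IsIntegralCurve (fun t ↦ (j t, deriv j t)) (fun t ↦ jacobiOperator K t) :=
  fun t ↦ (hasDerivAt hj t).prodMk (hasDerivAt_deriv hj t)

theorem fst_mem_of_isIntegralCurve {γ : ℝ → ℝ × ℝ}
    (hγ : IsIntegralCurve γ (fun t ↦ jacobiOperator K t)) :
    (fun t ↦ (γ t).1) ∈ jacobiSolutions K ∧ deriv (fun t ↦ (γ t).1) = fun t ↦ (γ t).2 := by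
  have h₁ (t : ℝ) : HasDerivAt (fun t ↦ (γ t).1) (γ t).2 t :=
    (ContinuousLinearMap.fst ℝ ℝ ℝ).hasFDerivAt.comp_hasDerivAt t (hγ t)
  have h₂ (t : ℝ) : HasDerivAt (fun t ↦ (γ t).2) (-K t * (γ t).1) t :=
    (ContinuousLinearMap.snd ℝ ℝ ℝ).hasFDerivAt.comp_hasDerivAt t (hγ t)
  have e : deriv (fun t ↦ (γ t).1) = fun t ↦ (γ t).2 := funext fun t ↦ (h₁ t).deriv
  exact ⟨⟨fun t ↦ (h₁ t).differentiableAt, e ▸ fun t ↦ (h₂ t).differentiableAt,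
    fun t ↦ e ▸ (h₂ t).deriv⟩, e⟩

theorem exists_mem_eq_deriv_eq (hK : Continuous K) {C : ℝ} (hKb : ∀ t, |K t| ≤ C) (a b : ℝ) :
    ∃ j ∈ jacobiSolutions K, j 0 = a ∧ deriv j 0 = b := by
  have hcont (p : ℝ × ℝ) : Continuous fun t ↦ jacobiOperator K t p := by
    simp only [jacobiOperator_apply]
    fun_prop
  obtain ⟨γ, hγ₀, hγ⟩ :=
    exists_isIntegralCurve_of_nnnorm_le hcont (nnnorm_jacobiOperator_le hKb) 0 (a, b)
  obtain ⟨hj, hj'⟩ := fst_mem_of_isIntegralCurve hγ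
  exact ⟨_, hj, by simp [hγ₀], by simp [hj', hγ₀]⟩

theorem eq_zero_of_eq_zero_of_deriv_eq_zero {C : ℝ} (hKb : ∀ t, |K t| ≤ C)
    (hj : j ∈ jacobiSolutions K) {t₀ : ℝ} (h₀ : j t₀ = 0) (h₁ : deriv j t₀ = 0) : j = 0 := by
  have hzero : IsIntegralCurve (fun _ ↦ (0 : ℝ × ℝ)) (fun t ↦ jacobiOperator K t) :=
    isIntegralCurve_const fun t ↦ map_zero (jacobiOperator K t)
  have := ODE_solution_unique_univ (s := fun _ ↦ univ) (t₀ := t₀)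
    (fun t ↦
      ((jacobiOperator K t).lipschitz.weaken (nnnorm_jacobiOperator_le hKb t)).lipschitzOnWith)
    (fun t ↦ ⟨isIntegralCurve hj t, trivial⟩) (fun t ↦ ⟨hzero t, trivial⟩) (by simp [h₀, h₁])
  exact funext fun t ↦ congrArg Prod.fst (congrFun this t)

theorem sq_convexOn (hKle : ∀ t, K t ≤ 0) (hj : j ∈ jacobiSolutions K) :
    ConvexOn ℝ univ fun t ↦ j t ^ 2 := by
  have h₁ (t : ℝ) : HasDerivAt (fun t ↦ j t ^ 2) (2 * (j t * deriv j t)) t :=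
    ((hasDerivAt hj t).pow 2).congr_deriv (by ring)
  have h₂ (t : ℝ) : HasDerivAt (fun t ↦ 2 * (j t * deriv j t))
      (2 * (deriv j t ^ 2 + -K t * j t ^ 2)) t :=
    (((hasDerivAt hj t).mul (hasDerivAt_deriv hj t)).const_mul 2).congr_deriv (by ring)
  refine Monotone.convexOn_univ_of_deriv (fun t ↦ (h₁ t).differentiableAt) ?_
  rw [deriv_eq h₁]
  refine monotone_of_hasDerivAt_nonneg h₂ fun t ↦ ?_
  have := mul_nonneg (neg_nonneg.2 (hKle t)) (sq_nonneg (j t))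
  positivity

theorem abs_le_max (hKle : ∀ t, K t ≤ 0) (hj : j ∈ jacobiSolutions K) {a b t : ℝ}
    (ht : t ∈ Icc a b) : |j t| ≤ max |j a| |j b| := by
  have := (sq_convexOn hKle hj).le_max_of_mem_Icc (mem_univ a) (mem_univ b) ht
  exact le_max_iff.2 ((le_max_iff.1 this).imp sq_le_sq.1 sq_le_sq.1)

theorem eq_zero_of_eq_zero_of_eq_zero (hKle : ∀ t, K t ≤ 0) {C : ℝ} (hKb : ∀ t, |K t| ≤ C)
    (hj : j ∈ jacobiSolutions K) {a b : ℝ} (hab : a < b) (ha : j a = 0) (hb : j b = 0) :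
    j = 0 := by
  have hIcc : EqOn j 0 (Icc a b) := fun t ht ↦ by
    simpa [ha, hb] using abs_le_max hKle hj ht
  have hm : (a + b) / 2 ∈ Ioo a b := ⟨by linarith, by linarith⟩
  have hloc : j =ᶠ[𝓝 ((a + b) / 2)] 0 :=
    eventuallyEq_of_mem (Icc_mem_nhds hm.1 hm.2) hIcc
  exact eq_zero_of_eq_zero_of_deriv_eq_zero hKb hj (hIcc (Ioo_subset_Icc_self hm))
    (by simp [hloc.deriv_eq])

theorem antitone_abs_of_abs_le (hKle : ∀ t, K t ≤ 0) (hj : j ∈ jacobiSolutions K) {M : ℝ}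
    (hM : ∀ t, 0 ≤ t → |j t| ≤ M) : Antitone fun t ↦ |j t| := by
  have := (sq_convexOn hKle hj).antitone_of_forall_Ici_le (a := 0) (M := M ^ 2) fun t ht ↦ by
    rw [← sq_abs]
    exact pow_le_pow_left₀ (abs_nonneg _) (hM t ht) 2
  exact fun x y hxy ↦ sq_le_sq.1 (this hxy)

theorem exists_abs_le_one (hK : Continuous K) (hKle : ∀ t, K t ≤ 0) {C : ℝ}
    (hKb : ∀ t, |K t| ≤ C) : ∃ j ∈ jacobiSolutions K, j 0 = 1 ∧ ∀ t, 0 ≤ t → |j t| ≤ 1 := by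
  obtain ⟨A, hA, hA₀, -⟩ := exists_mem_eq_deriv_eq hK hKb 1 0
  obtain ⟨B, hB, hB₀, hB₀'⟩ := exists_mem_eq_deriv_eq hK hKb 0 1
  have hB_ne (s : ℝ) (hs : 0 < s) : B s ≠ 0 := fun hBs ↦ by
    simp [eq_zero_of_eq_zero_of_eq_zero hKle hKb hB hs hB₀ hBs] at hB₀'
  set U : ℕ → Set ℝ := fun n ↦ {u | ∀ t ∈ Icc (0 : ℝ) (n + 1), |A t + u * B t| ≤ 1}
  have hU_closed (n : ℕ) : IsClosed (U n) := by
    simp only [U, ofPred_forall]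
    exact isClosed_biInter fun t _ ↦ isClosed_le (by fun_prop) continuous_const
  have hU_anti (n : ℕ) : U (n + 1) ⊆ U n :=
    fun u hu t ht ↦ hu t ⟨ht.1, ht.2.trans (by push_cast; linarith)⟩
  have hU_nonempty (n : ℕ) : (U n).Nonempty := by
    have hs : (0 : ℝ) < n + 1 := by positivity
    refine ⟨-(A (n + 1) / B (n + 1)), fun t ht ↦ ?_⟩
    have hj := add_mem hA ((jacobiSolutions K).smul_mem (-(A (n + 1) / B (n + 1))) hB)
    simpa [hA₀, hB₀, hB_ne _ hs] using abs_le_max hKle hj ht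
  have hU_compact : IsCompact (U 0) := by
    refine Metric.isCompact_of_isClosed_isBounded (hU_closed 0)
      (isBounded_iff_forall_norm_le.2 ⟨(1 + |A 1|) / |B 1|, fun u hu ↦ ?_⟩)
    rw [Real.norm_eq_abs, le_div_iff₀ (abs_pos.2 (hB_ne 1 one_pos)), ← abs_mul]
    have h₁ := hu 1 ⟨zero_le_one, by simp⟩
    have h₂ := abs_sub (A 1 + u * B 1) (A 1)
    simp only [add_sub_cancel_left] at h₂
    linarith
  obtain ⟨u, hu⟩ := hU_compact.nonempty_iInter_of_sequence_nonempty_isCompact_isClosed U hU_anti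
    hU_nonempty hU_closed
  refine ⟨A + u • B, add_mem hA ((jacobiSolutions K).smul_mem u hB), by simp [hA₀, hB₀],
    fun t ht ↦ ?_⟩
  obtain ⟨n, hn⟩ := exists_nat_ge t
  exact mem_iInter.1 hu n t ⟨ht, by linarith⟩

theorem eq_of_antitone_abs (hKle : ∀ t, K t ≤ 0) {C : ℝ} (hKb : ∀ t, |K t| ≤ C) {g : ℝ → ℝ}
    (hj : j ∈ jacobiSolutions K) (hg : g ∈ jacobiSolutions K) (hj' : Antitone fun t ↦ |j t|)
    (hg' : Antitone fun t ↦ |g t|) (h₀ : j 0 = g 0) : j = g := by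
  have hd := sub_mem hj hg
  have hd₀ : (j - g) 0 = 0 := by simp [h₀]
  have hbound (t : ℝ) (ht : 0 ≤ t) : |(j - g) t| ≤ |j 0| + |g 0| :=
    (abs_sub _ _).trans (add_le_add (hj' ht) (hg' ht))
  have hd₁ : (j - g) 1 = 0 := by
    simpa [hd₀] using antitone_abs_of_abs_le hKle hd hbound zero_le_one
  exact sub_eq_zero.1 (eq_zero_of_eq_zero_of_eq_zero hKle hKb hd zero_lt_one hd₀ hd₁)

end jacobiSolutions

theorem exists_unique_stable_jacobi_general (K : ℝ → ℝ) (c : ℝ)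
    (hK : Continuous K) (hKle : ∀ t, K t ≤ 0) (hKge : ∀ t, -c ^ 2 ≤ K t)
    (w : ℝ) :
    ∃! j : ℝ → ℝ,
      Differentiable ℝ j ∧ Differentiable ℝ (deriv j) ∧
      (∀ t, deriv (deriv j) t = -K t * j t) ∧
      j 0 = w ∧ Antitone (fun t => |j t|) := by
  have hKb (t : ℝ) : |K t| ≤ c ^ 2 := abs_le.2 ⟨hKge t, (hKle t).trans (sq_nonneg c)⟩
  obtain ⟨j, hj, hj₀, hj_le⟩ := jacobiSolutions.exists_abs_le_one hK hKle hKb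
  have hwj : w • j ∈ jacobiSolutions K := (jacobiSolutions K).smul_mem w hj
  have hwj_anti : Antitone fun t ↦ |(w • j) t| := by
    simpa [abs_mul] using (jacobiSolutions.antitone_abs_of_abs_le hKle hj hj_le).const_mul
      (abs_nonneg w)
  refine ⟨w • j, ⟨hwj.1, hwj.2.1, hwj.2.2, by simp [hj₀], hwj_anti⟩, ?_⟩
  rintro g ⟨hg, hg', hg'', hg₀, hg_anti⟩
  exact jacobiSolutions.eq_of_antitone_abs hKle hKb ⟨hg, hg', hg''⟩ hwj hg_anti hwj_anti
    (by simp [hg₀, hj₀])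

/-- Let `K : ℝ → ℝ` be continuous with `-c² ≤ K t ≤ 0` for all `t`, for some
constant `c > 0`. Then for every `w ∈ ℝ` there is a unique Jacobi solution
(`j'' = -K · j`) with `j 0 = w` such that `t ↦ |j t|` is nonincreasing on `ℝ`:
a unique stable Jacobi field with prescribed initial value. -/
theorem exists_unique_stable_jacobi (K : ℝ → ℝ) (c : ℝ) (hc : 0 < c)
    (hK : Continuous K) (hKle : ∀ t, K t ≤ 0) (hKge : ∀ t, -c ^ 2 ≤ K t)
    (w : ℝ) :
    ∃! j : ℝ → ℝ,
      Differentiable ℝ j ∧ Differentiable ℝ (deriv j) ∧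
      (∀ t, deriv (deriv j) t = -K t * j t) ∧
      j 0 = w ∧ Antitone (fun t => |j t|) :=
  exists_unique_stable_jacobi_general K c hK hKle hKge w
end

section
/- Let K : ℝ → ℝ be continuous with -c² ≤ K(t) ≤ 0 for all t, for some constant c > 0. Then for every w ∈ ℝ there exists a unique Jacobi solution j : ℝ → ℝ (j'' = -K·j) with j(0) = w such that t ↦ |j(t)| is nondecreasing on ℝ. That is, there is a unique unstable Jacobi field with any prescribed initial value. -/
/-!
Since `K ≤ 0`, a Jacobi solution that is nonnegative on an interval is convex there, and the
square of any Jacobi solution is convex on `ℝ`.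

Existence: let `C`, `S` be the solutions with `(C, C')(0) = (1, 0)` and `(S, S')(0) = (0, 1)`,
obtained as sums of Picard series whose terms have a definite sign, so that `C ≥ 1` and `S` has
the sign of `t`. For `s < 0` the solution vanishing at `s` and equal to `1` at `0` is
`C + ρ(s) S` with `ρ(s) = C(s) / (-S(s))`, and `ρ` is nondecreasing since the Wronskian is `1`.
For `V = inf ρ` the solution `j = C + V S` is nonnegative, hence convex, and it is at most `1`
on `(-∞, 0]` because each `C + ρ(s) S` is convex on `[s, 0]` with boundary values `0` and `1`.
A convex function bounded above on a left half-line is nondecreasing.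

Uniqueness: if `j₁`, `j₂` are unstable with `j₁ 0 = j₂ 0`, then `(j₁ - j₂)²` is convex and
bounded on `(-∞, 0]`, hence nondecreasing, hence zero on `(-∞, 0]`; uniqueness for the
first-order system in `(j, j')` then gives `j₁ = j₂`.
-/

open Set Filter Topology intervalIntegral Nat

theorem integral_zero_eq_neg_integral_comp_neg (f : ℝ → ℝ) (t : ℝ) :
    ∫ s in (0 : ℝ)..t, f s = -∫ s in (0 : ℝ)..-t, f (-s) := by
  rw [integral_comp_neg, neg_neg, neg_zero, integral_symm]

theorem abs_integral_le_of_abs_le_pow {f : ℝ → ℝ} {A t : ℝ} {k : ℕ}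
    (h : ∀ s, |s| ≤ |t| → |f s| ≤ A * |s| ^ k / k !) :
    |∫ s in (0 : ℝ)..t, f s| ≤ A * |t| ^ (k + 1) / (k + 1)! := by
  have key : ∀ {F : ℝ → ℝ} {u : ℝ}, 0 ≤ u →
      (∀ s ∈ Ioc 0 u, |F s| ≤ A * s ^ k / k !) →
      |∫ s in (0 : ℝ)..u, F s| ≤ A * u ^ (k + 1) / (k + 1)! := by
    intro F u hu hF
    refine (norm_integral_le_of_norm_le (f := F) (g := fun s => A * s ^ k / k !) hu
      (MeasureTheory.ae_of_all _ hF) (Continuous.intervalIntegrable (by fun_prop) _ _)).trans_eq ?_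
    rw [integral_div, integral_const_mul, integral_pow, factorial_succ]
    push_cast
    field_simp
    ring
  rcases le_total 0 t with ht | ht
  · rw [abs_of_nonneg ht]
    refine key ht fun s hs => ?_
    simpa [abs_of_pos hs.1] using h s (by rw [abs_of_pos hs.1, abs_of_nonneg ht]; exact hs.2)
  · rw [integral_zero_eq_neg_integral_comp_neg, abs_neg, abs_of_nonpos ht]
    refine key (neg_nonneg.2 ht) fun s hs => ?_
    simpa [abs_of_pos hs.1] using
      h (-s) (by rw [abs_neg, abs_of_pos hs.1, abs_of_nonpos ht]; exact hs.2)

theorem integral_nonneg_of_mul_nonneg {f : ℝ → ℝ} (hf : ∀ s, 0 ≤ s * f s) (t : ℝ) :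
    0 ≤ ∫ s in (0 : ℝ)..t, f s := by
  rcases le_total 0 t with ht | ht
  · rw [integral_of_le ht]
    exact MeasureTheory.setIntegral_nonneg measurableSet_Ioc fun s hs =>
      (mul_nonneg_iff_of_pos_left hs.1).1 (hf s)
  · rw [integral_zero_eq_neg_integral_comp_neg, integral_of_le (neg_nonneg.2 ht), neg_nonneg]
    exact MeasureTheory.setIntegral_nonpos measurableSet_Ioc fun s hs => by
      nlinarith [hf (-s), hs.1]

theorem mul_integral_nonneg {f : ℝ → ℝ} (hf : ∀ s, 0 ≤ f s) (t : ℝ) :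
    0 ≤ t * ∫ s in (0 : ℝ)..t, f s := by
  rcases le_total 0 t with ht | ht
  · exact mul_nonneg ht (integral_nonneg ht fun s _ => hf s)
  · rw [integral_symm]
    exact mul_nonneg_of_nonpos_of_nonpos ht (neg_nonpos.2 (integral_nonneg ht fun s _ => hf s))

theorem summable_pow_mul_pow_div_factorial {x y : ℝ} (hx : 0 ≤ x) (hy : 0 ≤ y) (k : ℕ) :
    Summable fun n : ℕ => x ^ n * y ^ (2 * n + k) / (2 * n + k)! := by
  refine ((Real.summable_pow_div_factorial (x * y ^ 2)).mul_left (y ^ k)).of_nonneg_of_le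
    (fun n => by positivity) fun n => ?_
  rw [show y ^ k * ((x * y ^ 2) ^ n / (n !)) = x ^ n * y ^ (2 * n + k) / (n !) by ring]
  gcongr
  omega

theorem ConvexOn.monotone_of_bddAbove {f : ℝ → ℝ} (hf : ConvexOn ℝ univ f) {a : ℝ}
    (hb : BddAbove (f '' Iic a)) : Monotone f := by
  intro x y hxy
  by_contra! hyx
  have hxy' : x < y := hxy.lt_of_ne (by rintro rfl; exact lt_irrefl _ hyx)
  obtain ⟨B, hB⟩ := hb
  set m := (f x - f y) / (y - x) with hm
  have hm0 : 0 < m := div_pos (by linarith) (by linarith)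
  set z := min a x - (|B - f x| + 1) / m - 1
  have hpos : 0 < (|B - f x| + 1) / m := by positivity
  have hzx : (|B - f x| + 1) / m < x - z := by linarith [min_le_right a x]
  have hzx' : z < x := by linarith
  have hslope := hf.slope_mono_adjacent (mem_univ z) (mem_univ y) hzx' hxy'
  rw [show (f y - f x) / (y - x) = -m by rw [hm]; ring, div_le_iff₀ (sub_pos.2 hzx')] at hslope
  have hmz := (div_lt_iff₀ hm0).1 hzx
  have : f z ≤ B := hB ⟨z, show z ≤ a by linarith [min_le_left a x], rfl⟩
  nlinarith [le_abs_self (B - f x)]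

theorem monotoneOn_div_neg_of_wronskian_nonneg {C S : ℝ → ℝ} (hC : Differentiable ℝ C)
    (hS : Differentiable ℝ S) (hW : ∀ t, 0 ≤ C t * deriv S t - deriv C t * S t)
    (hSneg : ∀ t < 0, S t < 0) : MonotoneOn (fun s => C s / -S s) (Iio 0) := by
  have hd : ∀ s < 0, HasDerivAt (fun s => C s / -S s)
      ((C s * deriv S s - deriv C s * S s) / S s ^ 2) s := fun s hs =>
    ((hC s).hasDerivAt.div (hS s).hasDerivAt.neg (neg_ne_zero.2 (hSneg s hs).ne)).congr_deriv
      (by simp only [Pi.neg_apply, neg_sq]; ring)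
  refine monotoneOn_of_deriv_nonneg (convex_Iio 0)
    (fun s hs => (hd s hs).continuousAt.continuousWithinAt) (fun s hs => ?_) fun s hs => ?_
  all_goals rw [interior_Iio] at hs
  · exact (hd s hs).differentiableAt.differentiableWithinAt
  · rw [(hd s hs).deriv]
    exact div_nonneg (hW s) (sq_nonneg _)

structure IsJacobiSolution (K j : ℝ → ℝ) : Prop where
  differentiable : Differentiable ℝ j
  differentiable_deriv : Differentiable ℝ (deriv j)
  deriv_deriv : ∀ t, deriv (deriv j) t = -K t * j t

namespace IsJacobiSolution

variable {K f g j : ℝ → ℝ}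

theorem of_hasDerivAt {j' : ℝ → ℝ} (hj : ∀ t, HasDerivAt j (j' t) t)
    (hj' : ∀ t, HasDerivAt j' (-K t * j t) t) : IsJacobiSolution K j := by
  have h : deriv j = j' := funext fun t => (hj t).deriv
  exact ⟨fun t => (hj t).differentiableAt, h ▸ fun t => (hj' t).differentiableAt,
    fun t => h ▸ (hj' t).deriv⟩

theorem hasDerivAt (hj : IsJacobiSolution K j) (t : ℝ) : HasDerivAt j (deriv j t) t :=
  (hj.differentiable t).hasDerivAt

theorem hasDerivAt_deriv (hj : IsJacobiSolution K j) (t : ℝ) :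
    HasDerivAt (deriv j) (-K t * j t) t :=
  hj.deriv_deriv t ▸ (hj.differentiable_deriv t).hasDerivAt

theorem add (hf : IsJacobiSolution K f) (hg : IsJacobiSolution K g) :
    IsJacobiSolution K fun t => f t + g t :=
  of_hasDerivAt (fun t => (hf.hasDerivAt t).add (hg.hasDerivAt t)) fun t =>
    ((hf.hasDerivAt_deriv t).add (hg.hasDerivAt_deriv t)).congr_deriv (by ring)

theorem sub (hf : IsJacobiSolution K f) (hg : IsJacobiSolution K g) :
    IsJacobiSolution K fun t => f t - g t :=
  of_hasDerivAt (fun t => (hf.hasDerivAt t).sub (hg.hasDerivAt t)) fun t =>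
    ((hf.hasDerivAt_deriv t).sub (hg.hasDerivAt_deriv t)).congr_deriv (by ring)

theorem const_mul (hj : IsJacobiSolution K j) (a : ℝ) : IsJacobiSolution K fun t => a * j t :=
  of_hasDerivAt (fun t => (hj.hasDerivAt t).const_mul a) fun t =>
    ((hj.hasDerivAt_deriv t).const_mul a).congr_deriv (by ring)

theorem wronskian_eq (hf : IsJacobiSolution K f) (hg : IsJacobiSolution K g) (t : ℝ) :
    f t * deriv g t - deriv f t * g t = f 0 * deriv g 0 - deriv f 0 * g 0 := by
  have hW : ∀ t, HasDerivAt (fun t => f t * deriv g t - deriv f t * g t) 0 t := fun t =>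
    (((hf.hasDerivAt t).mul (hg.hasDerivAt_deriv t)).sub
      ((hf.hasDerivAt_deriv t).mul (hg.hasDerivAt t))).congr_deriv (by ring)
  exact is_const_of_deriv_eq_zero (fun t => (hW t).differentiableAt) (fun t => (hW t).deriv) t 0

theorem convexOn (hK : ∀ t, K t ≤ 0) (hj : IsJacobiSolution K j) {D : Set ℝ}
    (hD : Convex ℝ D) (hnn : ∀ t ∈ D, 0 ≤ j t) : ConvexOn ℝ D j :=
  convexOn_of_deriv2_nonneg hD hj.differentiable.continuous.continuousOn
    hj.differentiable.differentiableOn hj.differentiable_deriv.differentiableOn fun t ht => by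
      rw [Function.iterate_succ_apply, Function.iterate_one, hj.deriv_deriv]
      exact mul_nonneg (neg_nonneg.2 (hK t)) (hnn t (interior_subset ht))

theorem convexOn_sq (hK : ∀ t, K t ≤ 0) (hj : IsJacobiSolution K j) :
    ConvexOn ℝ univ fun t => j t ^ 2 := by
  have hd : ∀ t, HasDerivAt (fun t => j t ^ 2) (2 * j t * deriv j t) t := fun t =>
    ((hj.hasDerivAt t).pow 2).congr_deriv (by ring)
  have hd' : ∀ t, HasDerivAt (fun t => 2 * j t * deriv j t)
      (2 * deriv j t ^ 2 + 2 * -K t * j t ^ 2) t := fun t =>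
    (((hj.hasDerivAt t).const_mul 2).mul (hj.hasDerivAt_deriv t)).congr_deriv (by ring)
  refine Monotone.convexOn_univ_of_deriv (fun t => (hd t).differentiableAt) ?_
  rw [funext fun t => (hd t).deriv]
  refine monotone_of_deriv_nonneg (fun t => (hd' t).differentiableAt) fun t => ?_
  rw [(hd' t).deriv]
  have := neg_nonneg.2 (hK t)
  positivity

theorem eq_of_eq_of_deriv_eq {L : ℝ} (hKb : ∀ t, |K t| ≤ L) (hf : IsJacobiSolution K f)
    (hg : IsJacobiSolution K g) {t₀ : ℝ} (h₀ : f t₀ = g t₀)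
    (h₁ : deriv f t₀ = deriv g t₀) :
    f = g := by
  set v : ℝ → ℝ × ℝ → ℝ × ℝ := fun t p => (p.2, -K t * p.1)
  have hv : ∀ t, LipschitzOnWith (max 1 L.toNNReal) (v t) univ := fun t => by
    refine (LipschitzWith.prod_snd.prodMk ((lipschitzWith_smul (-K t)).comp
      LipschitzWith.prod_fst)).lipschitzOnWith.weaken ?_
    rw [mul_one]
    exact max_le_max le_rfl (NNReal.le_toNNReal_of_coe_le (by simpa using hKb t))
  have hsol : ∀ {j}, IsJacobiSolution K j → ∀ t,
      HasDerivAt (fun t => (j t, deriv j t)) (v t (j t, deriv j t)) t ∧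
        (j t, deriv j t) ∈ univ :=
    fun hj t => ⟨(hj.hasDerivAt t).prodMk (hj.hasDerivAt_deriv t), trivial⟩
  have := ODE_solution_unique_univ hv (hsol hf) (hsol hg) (Prod.ext h₀ h₁)
  exact funext fun t => congrArg Prod.fst (congrFun this t)

theorem eq_of_monotone_abs {L : ℝ} (hK : ∀ t, K t ≤ 0) (hKb : ∀ t, |K t| ≤ L)
    (hf : IsJacobiSolution K f) (hg : IsJacobiSolution K g) (hfm : Monotone fun t => |f t|)
    (hgm : Monotone fun t => |g t|) (h₀ : f 0 = g 0) : f = g := by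
  have hbdd : BddAbove ((fun t => (f t - g t) ^ 2) '' Iic 0) := by
    refine ⟨(|f 0| + |g 0|) ^ 2, ?_⟩
    rintro _ ⟨t, ht, rfl⟩
    dsimp only
    rw [← sq_abs (f t - g t)]
    exact pow_le_pow_left₀ (abs_nonneg _) ((abs_sub _ _).trans (add_le_add (hfm ht) (hgm ht))) 2
  have hmono := ((hf.sub hg).convexOn_sq hK).monotone_of_bddAbove hbdd
  have hzero : ∀ t ≤ 0, f t = g t := fun t ht => by
    have := hmono ht
    simp only [h₀, sub_self] at this
    nlinarith [sq_nonneg (f t - g t)]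
  have hev : f =ᶠ[𝓝 (-1)] g := by
    filter_upwards [Iio_mem_nhds (show (-1 : ℝ) < 0 by norm_num)] with t ht using hzero t ht.le
  exact eq_of_eq_of_deriv_eq hKb hf hg hev.eq_of_nhds hev.deriv_eq

end IsJacobiSolution

noncomputable def picardTerm (K : ℝ → ℝ) (a b : ℝ) : ℕ → ℝ → ℝ
  | 0 => fun t => a + b * t
  | n + 1 => fun t => ∫ s in (0 : ℝ)..t, ∫ r in (0 : ℝ)..s, -K r * picardTerm K a b n r

/-- The zeroth term `a + b * t` is split off so that the remaining terms have the uniform family of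
derivatives `∫ r in 0..t, -K r * picardTerm K a b n r`. -/
noncomputable def picardSolution (K : ℝ → ℝ) (a b t : ℝ) : ℝ :=
  a + b * t + ∑' n, picardTerm K a b (n + 1) t

section Picard

variable {K : ℝ → ℝ} {a b L : ℝ}

theorem continuous_picardTerm (hK : Continuous K) (n : ℕ) : Continuous (picardTerm K a b n) := by
  induction n with
  | zero => exact continuous_const.add (continuous_const.mul continuous_id)
  | succ n ih =>
    refine continuous_primitive (fun _ _ => Continuous.intervalIntegrable ?_ _ _) 0
    exact continuous_primitive (fun _ _ => (hK.neg.mul ih).intervalIntegrable _ _) 0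

theorem hasDerivAt_picardTerm_succ (hK : Continuous K) (n : ℕ) (t : ℝ) :
    HasDerivAt (picardTerm K a b (n + 1)) (∫ r in (0 : ℝ)..t, -K r * picardTerm K a b n r) t :=
  ((continuous_primitive (fun _ _ => (hK.neg.mul (continuous_picardTerm hK n)).intervalIntegrable
    _ _) 0).integral_hasStrictDerivAt 0 t).hasDerivAt

theorem hasDerivAt_integral_neg_mul_picardTerm (hK : Continuous K) (n : ℕ) (t : ℝ) :
    HasDerivAt (fun t => ∫ r in (0 : ℝ)..t, -K r * picardTerm K a b n r)
      (-K t * picardTerm K a b n t) t :=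
  ((hK.neg.mul (continuous_picardTerm hK n)).integral_hasStrictDerivAt 0 t).hasDerivAt

theorem abs_integral_neg_mul_le (hKb : ∀ t, |K t| ≤ L) {f : ℝ → ℝ} {A t : ℝ} {k : ℕ}
    (hf : ∀ s, |s| ≤ |t| → |f s| ≤ A * |s| ^ k / k !) :
    |∫ r in (0 : ℝ)..t, -K r * f r| ≤ A * L * |t| ^ (k + 1) / (k + 1)! :=
  abs_integral_le_of_abs_le_pow fun s hs =>
    calc |-K s * f s| = |K s| * |f s| := by rw [abs_mul, abs_neg]
      _ ≤ L * (A * |s| ^ k / k !) :=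
        mul_le_mul (hKb s) (hf s hs) (abs_nonneg _) ((abs_nonneg _).trans (hKb s))
      _ = A * L * |s| ^ k / k ! := by ring

theorem abs_picardTerm_le (hKb : ∀ t, |K t| ≤ L) {R : ℝ} (n : ℕ) {t : ℝ}
    (ht : |t| ≤ R) :
    |picardTerm K a b n t| ≤ (|a| + |b| * R) * L ^ n * |t| ^ (2 * n) / (2 * n)! := by
  induction n generalizing t with
  | zero =>
    simp only [picardTerm, pow_zero, mul_one, mul_zero, factorial_zero, cast_one, div_one]
    exact (abs_add_le _ _).trans (by rw [abs_mul]; gcongr)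
  | succ n ih =>
    have := abs_integral_le_of_abs_le_pow fun s hs => abs_integral_neg_mul_le hKb
      fun r hr => ih (hr.trans (hs.trans ht))
    rw [show 2 * (n + 1) = 2 * n + 1 + 1 by ring, pow_succ, ← mul_assoc]
    exact this

theorem summable_picardTerm (hKb : ∀ t, |K t| ≤ L) (t : ℝ) :
    Summable fun n => picardTerm K a b n t := by
  have hL : 0 ≤ L := (abs_nonneg _).trans (hKb 0)
  refine Summable.of_norm_bounded ?_ fun n => abs_picardTerm_le hKb n le_rfl
  refine ((summable_pow_mul_pow_div_factorial hL (abs_nonneg t) 0).mul_left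
    (|a| + |b| * |t|)).congr fun n => ?_
  simp only [add_zero]
  ring

theorem hasDerivAt_picardSolution (hK : Continuous K) (hKb : ∀ t, |K t| ≤ L) (t : ℝ) :
    HasDerivAt (picardSolution K a b)
      (b + ∑' n, ∫ r in (0 : ℝ)..t, -K r * picardTerm K a b n r) t := by
  have hL : 0 ≤ L := (abs_nonneg _).trans (hKb 0)
  set R := |t| + 1
  have hR : 0 < R := by positivity
  have htail : HasDerivAt (fun t => ∑' n, picardTerm K a b (n + 1) t)
      (∑' n, ∫ r in (0 : ℝ)..t, -K r * picardTerm K a b n r) t := by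
    refine hasDerivAt_tsum_of_isPreconnected
      (u := fun n => (|a| + |b| * R) * L ^ n * L * R ^ (2 * n + 1) / (2 * n + 1)!) ?_
      Metric.isOpen_ball (convex_ball 0 R).isPreconnected
      (fun n y _ => hasDerivAt_picardTerm_succ hK n y) (fun n y hy => ?_)
      (Metric.mem_ball_self hR) (by simp [picardTerm]) (by simp [R])
    · exact ((summable_pow_mul_pow_div_factorial hL hR.le 1).mul_left
        ((|a| + |b| * R) * L)).congr fun n => by ring
    · have hyR : |y| ≤ R := (mem_ball_zero_iff.1 hy).le
      refine (abs_integral_neg_mul_le hKb fun s hs => abs_picardTerm_le hKb n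
        (hs.trans hyR)).trans ?_
      gcongr
  exact (((hasDerivAt_id t).const_mul b).const_add a).add htail |>.congr_deriv (by simp)

theorem hasDerivAt_deriv_picardSolution (hK : Continuous K) (hKb : ∀ t, |K t| ≤ L) (t : ℝ) :
    HasDerivAt (fun t => b + ∑' n, ∫ r in (0 : ℝ)..t, -K r * picardTerm K a b n r)
      (-K t * picardSolution K a b t) t := by
  have hL : 0 ≤ L := (abs_nonneg _).trans (hKb 0)
  set R := |t| + 1
  have hR : 0 < R := by positivity
  have hsum : HasDerivAt (fun t => ∑' n, ∫ r in (0 : ℝ)..t, -K r * picardTerm K a b n r)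
      (∑' n, -K t * picardTerm K a b n t) t := by
    refine hasDerivAt_tsum_of_isPreconnected
      (u := fun n => L * ((|a| + |b| * R) * L ^ n * R ^ (2 * n) / (2 * n)!)) ?_
      Metric.isOpen_ball (convex_ball 0 R).isPreconnected
      (fun n y _ => hasDerivAt_integral_neg_mul_picardTerm hK n y) (fun n y hy => ?_)
      (Metric.mem_ball_self hR) (by simp) (by simp [R])
    · exact ((summable_pow_mul_pow_div_factorial hL hR.le 0).mul_left
        (L * (|a| + |b| * R))).congr fun n => by simp only [add_zero]; ring
    · have hyR : |y| ≤ R := (mem_ball_zero_iff.1 hy).le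
      rw [Real.norm_eq_abs, abs_mul, abs_neg]
      refine mul_le_mul (hKb y) ((abs_picardTerm_le hKb n hyR).trans ?_) (abs_nonneg _) hL
      gcongr
  refine (hsum.const_add b).congr_deriv ?_
  rw [tsum_mul_left, (summable_picardTerm hKb t).tsum_eq_zero_add]
  rfl

theorem isJacobiSolution_picardSolution (hK : Continuous K) (hKb : ∀ t, |K t| ≤ L) :
    IsJacobiSolution K (picardSolution K a b) :=
  .of_hasDerivAt (hasDerivAt_picardSolution hK hKb) (hasDerivAt_deriv_picardSolution hK hKb)

theorem picardSolution_zero : picardSolution K a b 0 = a := by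
  simp [picardSolution, picardTerm]

theorem deriv_picardSolution_zero (hK : Continuous K) (hKb : ∀ t, |K t| ≤ L) :
    deriv (picardSolution K a b) 0 = b := by
  simp [(hasDerivAt_picardSolution hK hKb 0).deriv]

theorem picardTerm_nonneg (hK : ∀ t, K t ≤ 0) (ha : 0 ≤ a) (n : ℕ) (t : ℝ) :
    0 ≤ picardTerm K a 0 n t := by
  induction n generalizing t with
  | zero => simpa [picardTerm] using ha
  | succ n ih =>
    exact integral_nonneg_of_mul_nonneg (fun s => mul_integral_nonneg
      (fun r => mul_nonneg (neg_nonneg.2 (hK r)) (ih r)) s) t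

theorem mul_picardTerm_nonneg (hK : ∀ t, K t ≤ 0) (hb : 0 ≤ b) (n : ℕ) (t : ℝ) :
    0 ≤ t * picardTerm K 0 b n t := by
  induction n generalizing t with
  | zero => simp only [picardTerm, zero_add]; nlinarith [sq_nonneg t]
  | succ n ih =>
    exact mul_integral_nonneg (fun s => integral_nonneg_of_mul_nonneg (fun r => by
      rw [mul_left_comm]; exact mul_nonneg (neg_nonneg.2 (hK r)) (ih r)) s) t

theorem le_picardSolution (hK : ∀ t, K t ≤ 0) (ha : 0 ≤ a) (t : ℝ) :
    a ≤ picardSolution K a 0 t := by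
  simpa [picardSolution] using tsum_nonneg fun n => picardTerm_nonneg hK ha (n + 1) t

theorem mul_sub_picardSolution_nonneg (hK : ∀ t, K t ≤ 0) (hb : 0 ≤ b) (t : ℝ) :
    0 ≤ t * (picardSolution K 0 b t - b * t) := by
  simpa [picardSolution, ← tsum_mul_left] using
    tsum_nonneg fun n => mul_picardTerm_nonneg hK hb (n + 1) t

end Picard

theorem add_div_neg_mul_self (a : ℝ) {b : ℝ} (hb : b ≠ 0) : a + a / -b * b = 0 := by
  field_simp
  ring

theorem add_div_neg_mul_le_one {K C S : ℝ → ℝ} (hK : ∀ t, K t ≤ 0)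
    (hC : IsJacobiSolution K C) (hS : IsJacobiSolution K S) (hC0 : C 0 = 1) (hS0 : S 0 = 0)
    (hSneg : ∀ t < 0, S t < 0) (hmono : MonotoneOn (fun s => C s / -S s) (Iio 0)) {s t : ℝ}
    (hst : s ≤ t) (ht : t < 0) : C t + C s / -S s * S t ≤ 1 := by
  have hs : s < 0 := hst.trans_lt ht
  have hnn : ∀ u ∈ Icc s 0, 0 ≤ C u + C s / -S s * S u := fun u hu => by
    rcases hu.2.lt_or_eq with hu0 | rfl
    · have := mul_le_mul_of_nonpos_right (hmono hs hu0 hu.1) (hSneg u hu0).le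
      linarith [add_div_neg_mul_self (C u) (hSneg u hu0).ne]
    · simp [hC0, hS0]
  have := ((hC.add (hS.const_mul _)).convexOn hK (convex_Icc s 0) hnn).le_max_of_mem_Icc
    (left_mem_Icc.2 hs.le) (right_mem_Icc.2 hs.le) ⟨hst, ht.le⟩
  simpa [add_div_neg_mul_self (C s) (hSneg s hs).ne, hC0, hS0] using this

theorem exists_nonneg_monotone_of_fundamental {K C S : ℝ → ℝ} (hK : ∀ t, K t ≤ 0)
    (hC : IsJacobiSolution K C) (hS : IsJacobiSolution K S) (hC0 : C 0 = 1)
    (hC'0 : deriv C 0 = 0) (hS0 : S 0 = 0) (hS'0 : deriv S 0 = 1) (hCnn : ∀ t, 0 ≤ C t)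
    (hSneg : ∀ t < 0, S t < 0) (hSnn : ∀ t, 0 ≤ t → 0 ≤ S t) :
    ∃ j, IsJacobiSolution K j ∧ j 0 = 1 ∧ (∀ t, 0 ≤ j t) ∧ Monotone j := by
  set ρ : ℝ → ℝ := fun s => C s / -S s
  have hρmono : MonotoneOn ρ (Iio 0) :=
    monotoneOn_div_neg_of_wronskian_nonneg hC.differentiable hS.differentiable
      (fun t => by rw [hC.wronskian_eq hS, hC0, hC'0, hS0, hS'0]; norm_num) hSneg
  have hρS : ∀ s < 0, C s + ρ s * S s = 0 := fun s hs => add_div_neg_mul_self _ (hSneg s hs).ne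
  have hρnn : ∀ s < 0, 0 ≤ ρ s := fun s hs =>
    div_nonneg (hCnn s) (neg_nonneg.2 (hSneg s hs).le)
  have hJ : ∀ {s t}, s ≤ t → t < 0 → C t + ρ s * S t ≤ 1 :=
    add_div_neg_mul_le_one hK hC hS hC0 hS0 hSneg hρmono
  set V := sInf (ρ '' Iio 0)
  have hρbdd : BddBelow (ρ '' Iio 0) := ⟨0, by rintro _ ⟨s, hs, rfl⟩; exact hρnn s hs⟩
  have hV0 : 0 ≤ V :=
    le_csInf (nonempty_Iio.image ρ) (by rintro _ ⟨s, hs, rfl⟩; exact hρnn s hs)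
  have hVle : ∀ s < 0, V ≤ ρ s := fun s hs => csInf_le hρbdd ⟨s, hs, rfl⟩
  have hj := hC.add (hS.const_mul V)
  have hj0 : C 0 + V * S 0 = 1 := by simp [hC0, hS0]
  have hjnn : ∀ t, 0 ≤ C t + V * S t := by
    intro t
    rcases lt_or_ge t 0 with ht | ht
    · have := mul_le_mul_of_nonpos_right (hVle t ht) (hSneg t ht).le
      linarith [hρS t ht]
    · exact add_nonneg (hCnn t) (mul_nonneg hV0 (hSnn t ht))
  have hjle : ∀ t < 0, C t + V * S t ≤ 1 := by
    intro t ht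
    have hSt := neg_pos.2 (hSneg t ht)
    suffices (C t - 1) / -S t ≤ V by
      rw [div_le_iff₀ hSt] at this
      linarith
    refine le_csInf (nonempty_Iio.image ρ) ?_
    rintro _ ⟨s, hs, rfl⟩
    rw [div_le_iff₀ hSt]
    rcases le_total s t with hst | hts
    · linarith [hJ hst ht]
    · nlinarith [hρmono ht hs hts, hρS t ht]
  refine ⟨_, hj, hj0, hjnn, (hj.convexOn hK convex_univ fun t _ => hjnn t).monotone_of_bddAbove
    (a := 0) ⟨1, ?_⟩⟩
  rintro _ ⟨t, ht, rfl⟩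
  rcases (mem_Iic.1 ht).lt_or_eq with ht | rfl
  exacts [hjle t ht, hj0.le]

theorem exists_unstable_isJacobiSolution {K : ℝ → ℝ} {L : ℝ} (hK : Continuous K)
    (hKle : ∀ t, K t ≤ 0) (hKb : ∀ t, |K t| ≤ L) :
    ∃ j, IsJacobiSolution K j ∧ j 0 = 1 ∧ (∀ t, 0 ≤ j t) ∧ Monotone j := by
  have hS := fun t => mul_sub_picardSolution_nonneg (K := K) hKle zero_le_one t
  refine exists_nonneg_monotone_of_fundamental hKle
    (isJacobiSolution_picardSolution (a := 1) (b := 0) hK hKb)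
    (isJacobiSolution_picardSolution (a := 0) (b := 1) hK hKb) picardSolution_zero
    (deriv_picardSolution_zero hK hKb) picardSolution_zero (deriv_picardSolution_zero hK hKb)
    (fun t => zero_le_one.trans (le_picardSolution hKle zero_le_one t))
    (fun t ht => by nlinarith [hS t]) fun t ht => ?_
  rcases ht.eq_or_lt with rfl | ht
  · exact picardSolution_zero.ge
  · nlinarith [hS t]

theorem exists_unique_unstable_jacobi_general (K : ℝ → ℝ) (c : ℝ)
    (hK : Continuous K) (hKle : ∀ t, K t ≤ 0) (hKge : ∀ t, -c ^ 2 ≤ K t)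
    (w : ℝ) :
    ∃! j : ℝ → ℝ,
      Differentiable ℝ j ∧ Differentiable ℝ (deriv j) ∧
      (∀ t, deriv (deriv j) t = -K t * j t) ∧
      j 0 = w ∧ Monotone (fun t => |j t|) := by
  have hKb : ∀ t, |K t| ≤ c ^ 2 := fun t => abs_le.2 ⟨hKge t, (hKle t).trans (sq_nonneg c)⟩
  obtain ⟨j₀, hj₀, hj₀0, hj₀nn, hj₀mono⟩ :=
    exists_unstable_isJacobiSolution hK hKle hKb
  have hj := hj₀.const_mul w
  have hjmono : Monotone fun t => |w * j₀ t| := by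
    simp_rw [abs_mul, abs_of_nonneg (hj₀nn _)]
    exact hj₀mono.const_mul (abs_nonneg w)
  refine ⟨fun t => w * j₀ t,
    ⟨hj.differentiable, hj.differentiable_deriv, hj.deriv_deriv, by simp [hj₀0], hjmono⟩, ?_⟩
  rintro j ⟨hd, hd', hdd, hj0, hjm⟩
  exact IsJacobiSolution.eq_of_monotone_abs hKle hKb ⟨hd, hd', hdd⟩ hj hjm hjmono
    (by simp [hj0, hj₀0])

/-- Let `K : ℝ → ℝ` be continuous with `-c² ≤ K t ≤ 0` for all `t`, for some
constant `c > 0`. Then for every `w ∈ ℝ` there is a unique Jacobi solution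
(`j'' = -K · j`) with `j 0 = w` such that `t ↦ |j t|` is nondecreasing on `ℝ`:
a unique unstable Jacobi field with prescribed initial value. -/
theorem exists_unique_unstable_jacobi (K : ℝ → ℝ) (c : ℝ) (hc : 0 < c)
    (hK : Continuous K) (hKle : ∀ t, K t ≤ 0) (hKge : ∀ t, -c ^ 2 ≤ K t)
    (w : ℝ) :
    ∃! j : ℝ → ℝ,
      Differentiable ℝ j ∧ Differentiable ℝ (deriv j) ∧
      (∀ t, deriv (deriv j) t = -K t * j t) ∧
      j 0 = w ∧ Monotone (fun t => |j t|) :=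
  exists_unique_unstable_jacobi_general K c hK hKle hKge w
end

section
/- Let K : ℝ → ℝ be continuous with K(t) ≤ 0 for all t, and let j : ℝ → ℝ be a stable Jacobi solution (j'' = -K·j with t ↦ |j(t)| nonincreasing on ℝ) with j(0) > 0. If K(0) < 0, then j'(0) < 0. Dually, if j is an unstable Jacobi solution (t ↦ |j(t)| nondecreasing on ℝ) with j(0) > 0 and K(0) < 0, then j'(0) > 0. That is, the stable and unstable slope functions satisfy a^s(v) < 0 < a^u(v) whenever the curvature at the footpoint is negative. -/
open Set

private lemma pos_nbhd {f : ℝ → ℝ} (hf : Continuous f) (h0 : 0 < f 0) :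
    ∃ δ > 0, ∀ t ∈ Ioo (-δ) δ, 0 < f t := by
  have h := (hf.tendsto 0).eventually (eventually_gt_nhds h0)
  rw [Metric.eventually_nhds_iff] at h
  obtain ⟨δ, hδ, h⟩ := h
  exact ⟨δ, hδ, fun t ht => h (by
    rw [Real.dist_eq, sub_zero]; exact abs_lt.2 ⟨ht.1, ht.2⟩)⟩

private lemma gt_right {j : ℝ → ℝ} (hj : Differentiable ℝ j) {δ : ℝ} (hδ : 0 < δ)
    (hpos : ∀ t ∈ Ioo (0:ℝ) δ, 0 < deriv j t) : j 0 < j δ := by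
  have hmono : StrictMonoOn j (Icc (0:ℝ) δ) := by
    apply strictMonoOn_of_deriv_pos (convex_Icc _ _) hj.continuous.continuousOn
    intro x hx
    rw [interior_Icc] at hx
    exact hpos x hx
  exact hmono ⟨le_refl 0, hδ.le⟩ ⟨hδ.le, le_refl δ⟩ hδ

private lemma gt_left {j : ℝ → ℝ} (hj : Differentiable ℝ j) {δ : ℝ} (hδ : 0 < δ)
    (hneg : ∀ t ∈ Ioo (-δ) (0:ℝ), deriv j t < 0) : j 0 < j (-δ) := by
  have hmono : StrictAntiOn j (Icc (-δ) (0:ℝ)) := by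
    apply strictAntiOn_of_deriv_neg (convex_Icc _ _) hj.continuous.continuousOn
    intro x hx
    rw [interior_Icc] at hx
    exact hneg x hx
  exact hmono ⟨le_refl _, (neg_neg_iff_pos.2 hδ).le⟩ ⟨(neg_neg_iff_pos.2 hδ).le, le_refl _⟩
    (neg_neg_iff_pos.2 hδ)

private lemma key (K : ℝ → ℝ) (hK : Continuous K) (hK0 : K 0 < 0)
    (j : ℝ → ℝ) (hj : Differentiable ℝ j) (hj' : Differentiable ℝ (deriv j))
    (heq : ∀ t, deriv (deriv j) t = -K t * j t) (hj0 : 0 < j 0)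
    (hd : deriv j 0 = 0) : ∃ a > 0, j 0 < j a ∧ j 0 < j (-a) := by
  -- deriv deriv j = -K * j is continuous and positive at 0
  have hcont : Continuous fun t => -K t * j t := (hK.neg).mul hj.continuous
  have h0 : 0 < -K 0 * j 0 := mul_pos (by linarith) hj0
  obtain ⟨δ, hδ, hpos⟩ := pos_nbhd hcont h0
  -- deriv j strictly mono on Icc (-δ/2) (δ/2)
  have hmono : StrictMonoOn (deriv j) (Icc (-(δ/2)) (δ/2)) := by
    apply strictMonoOn_of_deriv_pos (convex_Icc _ _) hj'.continuous.continuousOn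
    intro x hx
    rw [interior_Icc] at hx
    rw [heq x]
    exact hpos x ⟨by linarith [hx.1], by linarith [hx.2]⟩
  refine ⟨δ/2, by linarith, ?_, ?_⟩
  · apply gt_right hj (by linarith : (0:ℝ) < δ/2)
    intro t ht
    have := hmono (show (0:ℝ) ∈ Icc (-(δ/2)) (δ/2) from ⟨by linarith, by linarith⟩) (show t ∈ Icc (-(δ/2)) (δ/2) from ⟨by linarith [ht.1], ht.2.le⟩) ht.1
    rwa [hd] at this
  · apply gt_left hj (by linarith : (0:ℝ) < δ/2)
    intro t ht
    have := hmono (show t ∈ Icc (-(δ/2)) (δ/2) from ⟨ht.1.le, by linarith [ht.2]⟩) (show (0:ℝ) ∈ Icc (-(δ/2)) (δ/2) from ⟨by linarith, by linarith⟩) ht.2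
    rwa [hd] at this

/-- Let `K : ℝ → ℝ` be continuous and nonpositive with `K 0 < 0`. Then every stable
Jacobi solution (`j'' = -K · j` with `|j|` nonincreasing) with `j 0 > 0` has
`j' 0 < 0`, and every unstable Jacobi solution (`|j|` nondecreasing) with `j 0 > 0`
has `j' 0 > 0`: the slope functions satisfy `a^s(v) < 0 < a^u(v)` whenever the
curvature at the footpoint is negative. -/
theorem stable_unstable_slopes_of_negative_curvature
    (K : ℝ → ℝ) (hK : Continuous K) (hKle : ∀ t, K t ≤ 0) (hK0 : K 0 < 0) :
    (∀ j : ℝ → ℝ, Differentiable ℝ j → Differentiable ℝ (deriv j) →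
      (∀ t, deriv (deriv j) t = -K t * j t) → Antitone (fun t => |j t|) →
      0 < j 0 → deriv j 0 < 0) ∧
    (∀ j : ℝ → ℝ, Differentiable ℝ j → Differentiable ℝ (deriv j) →
      (∀ t, deriv (deriv j) t = -K t * j t) → Monotone (fun t => |j t|) →
      0 < j 0 → 0 < deriv j 0) := by
  constructor
  · intro j hj hj' heq hanti hj0
    by_contra h
    push_neg at h
    have contra : ∀ a : ℝ, 0 < a → ¬ (j 0 < j a) := by
      intro a ha hlt
      have h1 : |j a| ≤ |j 0| := hanti ha.le
      rw [abs_of_pos hj0] at h1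
      have := le_abs_self (j a)
      linarith
    rcases eq_or_lt_of_le h with hd | hd
    · obtain ⟨a, ha, h1, _⟩ := key K hK hK0 j hj hj' heq hj0 hd.symm
      exact contra a ha h1
    · -- deriv j 0 > 0: deriv j positive near 0
      obtain ⟨δ, hδ, hpos⟩ := pos_nbhd hj'.continuous hd
      have := gt_right hj (by linarith : (0:ℝ) < δ/2)
        (fun t ht => hpos t ⟨by linarith [ht.1], by linarith [ht.2]⟩)
      exact contra (δ/2) (by linarith) this
  · intro j hj hj' heq hmono hj0
    by_contra h
    push_neg at h
    have contra : ∀ a : ℝ, 0 < a → ¬ (j 0 < j (-a)) := by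
      intro a ha hlt
      have h1 : |j (-a)| ≤ |j 0| := hmono (by linarith : -a ≤ 0)
      rw [abs_of_pos hj0] at h1
      have := le_abs_self (j (-a))
      linarith
    rcases eq_or_lt_of_le h with hd | hd
    · obtain ⟨a, ha, _, h2⟩ := key K hK hK0 j hj hj' heq hj0 hd
      exact contra a ha h2
    · -- deriv j 0 < 0: deriv j negative near 0
      have : 0 < (fun t => -(deriv j t)) 0 := by simpa using neg_pos.2 hd
      obtain ⟨δ, hδ, hneg⟩ := pos_nbhd hj'.continuous.neg this
      have := gt_left hj (by linarith : (0:ℝ) < δ/2)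
        (fun t ht => by
          have := hneg t ⟨by linarith [ht.1], by linarith [ht.2]⟩
          simpa using neg_pos.1 (by simpa using this))
      exact contra (δ/2) (by linarith) this
end
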